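/- arXiv:1506.08162 — 9 statements merged into one kernel-verified Lean document; each statement's English description precedes it below -/
import Mathlib

section
/- Let (φ, y, ρ, H) be a solution of the flat FLRW system on an interval I such that ρ(t₀) ≥ 0 for some t₀ ∈ I. Then ρ(t) ≥ 0 for all t ∈ I, and the Hubble function H is non-increasing on I (i.e. H(s) ≥ H(t) whenever s ≤ t in I). -/
/-!
The density obeys the linear equation `ρ' = -ρ (3γH + α(φ) y)` with continuous coefficient,
so with an integrating factor `ρ(t) = ρ(s) exp (-∫ₛᵗ (3γH + α(φ) y))`: the sign of `ρ` is the
same at all times. Once `ρ ≥ 0`, the Raychaudhuri equation `H' = -(y² + γρ)/2` gives `H' ≤ 0`.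
-/

open Real Set Filter

/-- A solution of the flat FLRW system on the set `I`:
`φ' = y`, `y' = -3Hy - V'(φ) + α(φ)ρ`, `ρ' = -ρ(3γH + α(φ)y)`, `H' = -(1/2)(y² + γρ)`. -/
def IsFLRWSolution (γ : ℝ) (α V : ℝ → ℝ) (I : Set ℝ) (φ y ρ H : ℝ → ℝ) : Prop :=
  ∀ t ∈ I,
    HasDerivWithinAt φ (y t) I t ∧
    HasDerivWithinAt y (-3 * H t * y t - deriv V (φ t) + α (φ t) * ρ t) I t ∧
    HasDerivWithinAt ρ (-(ρ t) * (3 * γ * H t + α (φ t) * y t)) I t ∧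
    HasDerivWithinAt H (-(1/2) * (y t ^ 2 + γ * ρ t)) I t

/-- The Friedmann constraint `3H² = (1/2)y² + V(φ) + ρ` at time `t`. -/
def FriedmannConstraint (V : ℝ → ℝ) (φ y ρ H : ℝ → ℝ) (t : ℝ) : Prop :=
  3 * H t ^ 2 = (1/2) * y t ^ 2 + V (φ t) + ρ t

theorem exists_hasDerivAt_eq_of_continuousOn_Icc {g : ℝ → ℝ} {a b : ℝ}
    (hg : ContinuousOn g (Icc a b)) : ∃ G : ℝ → ℝ, ∀ x ∈ Icc a b, HasDerivAt G (g x) x := by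
  -- Extend `g` to a continuous function on `ℝ` (Tietze) and integrate the extension.
  obtain ⟨F, hF⟩ := ContinuousMap.exists_restrict_eq (Y := ℝ) isClosed_Icc ⟨_, hg.domRestrict⟩
  refine ⟨fun u => ∫ x in a..u, F x, fun x hx => ?_⟩
  rw [← show F x = g x from ContinuousMap.congr_fun hF ⟨x, hx⟩]
  exact (F.continuous.integral_hasStrictDerivAt a x).hasDerivAt

theorem exists_pos_mul_eq_of_hasDerivWithinAt_mul {ρ g : ℝ → ℝ} {a b : ℝ} (hab : a ≤ b)
    (hg : ContinuousOn g (Icc a b))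
    (hρ : ∀ x ∈ Icc a b, HasDerivWithinAt ρ (ρ x * g x) (Icc a b) x) :
    ∃ c, 0 < c ∧ ρ b = c * ρ a := by
  obtain ⟨G, hG⟩ := exists_hasDerivAt_eq_of_continuousOn_Icc hg
  have hconst : ∀ x ∈ Icc a b, ρ x * exp (-G x) = ρ a * exp (-G a) := by
    apply constant_of_has_deriv_right_zero
    · exact fun x hx => (hρ x hx).continuousWithinAt.mul
        ((hG x hx).fun_neg.exp.continuousAt.continuousWithinAt)
    · intro x hx
      have hρx := (hρ x (Ico_subset_Icc_self hx)).mono_of_mem_nhdsWithin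
        (Icc_mem_nhdsGE_of_mem hx)
      have hexp := (hG x (Ico_subset_Icc_self hx)).fun_neg.exp.hasDerivWithinAt (s := Ici x)
      refine (hρx.fun_mul hexp).congr_deriv ?_
      ring
  refine ⟨exp (G b - G a), exp_pos _, ?_⟩
  have hb := hconst b (right_mem_Icc.2 hab)
  calc ρ b = ρ b * exp (-G b) * exp (G b) := by rw [mul_assoc, ← exp_add]; simp
    _ = exp (G b - G a) * ρ a := by rw [hb, mul_assoc, ← exp_add, sub_eq_neg_add, mul_comm]

theorem nonneg_of_hasDerivWithinAt_mul {ρ g : ℝ → ℝ} {I : Set ℝ} (hI : I.OrdConnected)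
    (hg : ContinuousOn g I) (hρ : ∀ x ∈ I, HasDerivWithinAt ρ (ρ x * g x) I x)
    {t₀ : ℝ} (ht₀ : t₀ ∈ I) (hρ₀ : 0 ≤ ρ t₀) : ∀ t ∈ I, 0 ≤ ρ t := by
  have hsign : ∀ a ∈ I, ∀ b ∈ I, a ≤ b → ∃ c, 0 < c ∧ ρ b = c * ρ a := by
    intro a ha b hb hab
    have hsub : Icc a b ⊆ I := hI.out ha hb
    exact exists_pos_mul_eq_of_hasDerivWithinAt_mul hab (hg.mono hsub)
      fun x hx => (hρ x (hsub hx)).mono hsub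
  intro t ht
  rcases le_total t₀ t with h | h
  · obtain ⟨c, hc, hct⟩ := hsign t₀ ht₀ t ht h
    rw [hct]
    positivity
  · obtain ⟨c, hc, hct⟩ := hsign t ht t₀ ht₀ h
    rw [hct] at hρ₀
    exact nonneg_of_mul_nonneg_right hρ₀ hc

namespace IsFLRWSolution

variable {γ : ℝ} {α V : ℝ → ℝ} {I : Set ℝ} {φ y ρ H : ℝ → ℝ}

theorem density_nonneg (hsol : IsFLRWSolution γ α V I φ y ρ H) (hα : Continuous α)
    (hI : I.OrdConnected) {t₀ : ℝ} (ht₀ : t₀ ∈ I) (hρ₀ : 0 ≤ ρ t₀) : ∀ t ∈ I, 0 ≤ ρ t := by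
  have hφ : ContinuousOn φ I := fun t ht => (hsol t ht).1.continuousWithinAt
  have hy : ContinuousOn y I := fun t ht => (hsol t ht).2.1.continuousWithinAt
  have hH : ContinuousOn H I := fun t ht => (hsol t ht).2.2.2.continuousWithinAt
  refine nonneg_of_hasDerivWithinAt_mul hI
    (g := fun t => -(3 * γ * H t + α (φ t) * y t)) (by fun_prop) (fun t ht => ?_) ht₀ hρ₀
  convert (hsol t ht).2.2.1 using 1
  ring

theorem antitoneOn_hubble (hsol : IsFLRWSolution γ α V I φ y ρ H) (hγ : 0 ≤ γ)
    (hI : Convex ℝ I) (hρ : ∀ t ∈ I, 0 ≤ ρ t) : AntitoneOn H I := by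
  refine antitoneOn_of_hasDerivWithinAt_nonpos hI
    (fun t ht => (hsol t ht).2.2.2.continuousWithinAt)
    (fun t ht => (hsol t (interior_subset ht)).2.2.2.mono interior_subset) fun t ht => ?_
  have := mul_nonneg hγ (hρ t (interior_subset ht))
  nlinarith [sq_nonneg (y t)]

end IsFLRWSolution

theorem flrw_density_nonneg_and_H_nonincreasing_general
    (γ : ℝ) (hγ : 0 < γ) (α V : ℝ → ℝ) (hα : Continuous α)
    (I : Set ℝ) (hI : Convex ℝ I) (φ y ρ H : ℝ → ℝ)
    (hsol : IsFLRWSolution γ α V I φ y ρ H)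
    (t₀ : ℝ) (ht₀ : t₀ ∈ I) (hρ₀ : 0 ≤ ρ t₀) :
    (∀ t ∈ I, 0 ≤ ρ t) ∧
    (∀ s ∈ I, ∀ t ∈ I, s ≤ t → H t ≤ H s) := by
  have hρ := hsol.density_nonneg hα hI.ordConnected ht₀ hρ₀
  exact ⟨hρ, fun s hs t ht hst => hsol.antitoneOn_hubble hγ.le hI hρ hs ht hst⟩

/-- if `ρ(t₀) ≥ 0` at some `t₀ ∈ I` then `ρ ≥ 0` on all of `I`,
and the Hubble function is non-increasing on `I`. -/
theorem flrw_density_nonneg_and_H_nonincreasing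
    (γ : ℝ) (hγ : 0 < γ) (α V : ℝ → ℝ) (hα : Continuous α) (hV : ContDiff ℝ 2 V)
    (I : Set ℝ) (hI : Convex ℝ I) (φ y ρ H : ℝ → ℝ)
    (hsol : IsFLRWSolution γ α V I φ y ρ H)
    (t₀ : ℝ) (ht₀ : t₀ ∈ I) (hρ₀ : 0 ≤ ρ t₀) :
    (∀ t ∈ I, 0 ≤ ρ t) ∧
    (∀ s ∈ I, ∀ t ∈ I, s ≤ t → H t ≤ H s) :=
  flrw_density_nonneg_and_H_nonincreasing_general γ hγ α V hα I hI φ y ρ H hsol t₀ ht₀ hρ₀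
end

section
/- Let (φ, y, ρ, H) be a solution of the flat FLRW system on an interval I with ρ(t) ≥ 0 for all t ∈ I. Then for all t₀ ≤ t in I, the scalar field displacement satisfies the Cauchy–Schwarz bound (φ(t) − φ(t₀))² ≤ 2(t − t₀)(H(t₀) − H(t)). -/
open Real Set Filter

/- An integral-free Cauchy–Schwarz `(∫ f')² ≤ (b - a) ∫ f'² ≤ (b - a) ∫ g'`: for every real `c`,
`s ↦ c² s - 2c f(s) + g(s)` has derivative `(c - f')² + (g' - f'²) ≥ 0`, so its increment over
`[a, b]` is a quadratic in `c` that is never negative, whence its discriminant is `≤ 0`. -/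
theorem sq_sub_le_mul_sub_of_sq_deriv_le {D : Set ℝ} (hD : Convex ℝ D) {f g f' g' : ℝ → ℝ}
    (hf : ∀ x ∈ D, HasDerivWithinAt f (f' x) D x) (hg : ∀ x ∈ D, HasDerivWithinAt g (g' x) D x)
    (hfg : ∀ x ∈ D, f' x ^ 2 ≤ g' x) {a b : ℝ} (ha : a ∈ D) (hb : b ∈ D) (hab : a ≤ b) :
    (f b - f a) ^ 2 ≤ (b - a) * (g b - g a) := by
  have hmono : ∀ c : ℝ, MonotoneOn (fun s => c ^ 2 * s - 2 * c * f s + g s) D := by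
    intro c
    have hderiv : ∀ x ∈ D,
        HasDerivWithinAt (fun s => c ^ 2 * s - 2 * c * f s + g s) (c ^ 2 - 2 * c * f' x + g' x) D x :=
      fun x hx => by
        simpa using (((hasDerivWithinAt_id x D).const_mul (c ^ 2)).fun_sub
          ((hf x hx).const_mul (2 * c))).fun_add (hg x hx)
    refine monotoneOn_of_hasDerivWithinAt_nonneg hD
      (fun x hx => (hderiv x hx).continuousWithinAt)
      (fun x hx => (hderiv x (interior_subset hx)).mono interior_subset) fun x hx => ?_
    nlinarith [sq_nonneg (c - f' x), hfg x (interior_subset hx)]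
  have hquad : ∀ c : ℝ, 0 ≤ (b - a) * (c * c) + (-2 * (f b - f a)) * c + (g b - g a) :=
    fun c => by linarith [hmono c ha hb hab]
  have hdiscrim := discrim_le_zero hquad
  rw [discrim] at hdiscrim
  linarith

theorem flrw_cauchy_schwarz_bound_general
    (γ : ℝ) (hγ : 0 < γ) (α V : ℝ → ℝ)
    (I : Set ℝ) (hI : Convex ℝ I) (φ y ρ H : ℝ → ℝ)
    (hsol : IsFLRWSolution γ α V I φ y ρ H)
    (hρ : ∀ t ∈ I, 0 ≤ ρ t) :
    ∀ t₀ ∈ I, ∀ t ∈ I, t₀ ≤ t →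
      (φ t - φ t₀) ^ 2 ≤ 2 * (t - t₀) * (H t₀ - H t) := by
  intro t₀ ht₀ t ht hle
  have hH : ∀ s ∈ I, HasDerivWithinAt (fun u => -2 * H u) (y s ^ 2 + γ * ρ s) I s :=
    fun s hs => by simpa [← mul_assoc] using ((hsol s hs).2.2.2).const_mul (-2)
  have hbound := sq_sub_le_mul_sub_of_sq_deriv_le hI (fun s hs => (hsol s hs).1) hH
    (fun s hs => le_add_of_nonneg_right (mul_nonneg hγ.le (hρ s hs))) ht₀ ht hle
  linear_combination hbound

/-- the Cauchy–Schwarz bound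
`(φ(t) - φ(t₀))² ≤ 2(t - t₀)(H(t₀) - H(t))` for `t₀ ≤ t` in `I`, when `ρ ≥ 0` on `I`. -/
theorem flrw_cauchy_schwarz_bound
    (γ : ℝ) (hγ : 0 < γ) (α V : ℝ → ℝ) (hα : Continuous α) (hV : ContDiff ℝ 2 V)
    (I : Set ℝ) (hI : Convex ℝ I) (φ y ρ H : ℝ → ℝ)
    (hsol : IsFLRWSolution γ α V I φ y ρ H)
    (hρ : ∀ t ∈ I, 0 ≤ ρ t) :
    ∀ t₀ ∈ I, ∀ t ∈ I, t₀ ≤ t →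
      (φ t - φ t₀) ^ 2 ≤ 2 * (t - t₀) * (H t₀ - H t) :=
  flrw_cauchy_schwarz_bound_general γ hγ α V I hI φ y ρ H hsol hρ
end

section
/- Let a > 0 and b > 0, and let z : [t₀, t₁] → ℝ be a differentiable function satisfying the Riccati differential inequality z'(t) ≤ −a·z(t)² − b for all t ∈ [t₀, t₁]. Then t₁ − t₀ < π/√(ab). Consequently, any solution of z' = −a z² − b cannot be defined on a time interval of length π/√(ab) or longer. -/
open Real Set Filter

/-- uniform finite-time blow-up for the Riccati differential inequality
`z' ≤ -a z² - b` with `a, b > 0`: any differentiable function satisfying it on `[t₀, t₁]`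
forces `t₁ - t₀ < π / √(ab)`, a bound independent of the initial value. -/
theorem riccati_blowup_time_bound
    (a b : ℝ) (ha : 0 < a) (hb : 0 < b)
    (t₀ t₁ : ℝ) (ht : t₀ ≤ t₁)
    (z z' : ℝ → ℝ)
    (hz : ∀ t ∈ Set.Icc t₀ t₁, HasDerivWithinAt z (z' t) (Set.Icc t₀ t₁) t)
    (hineq : ∀ t ∈ Set.Icc t₀ t₁, z' t ≤ -a * z t ^ 2 - b) :
    t₁ - t₀ < π / Real.sqrt (a * b) := by
  set K := Real.sqrt (a * b) with hKdef
  set c := Real.sqrt (a / b) with hcdef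
  have hK : 0 < K := Real.sqrt_pos.mpr (mul_pos ha hb)
  have hc : 0 < c := Real.sqrt_pos.mpr (div_pos ha hb)
  have hcb : c * b = K := by
    have hsq : (c * b) ^ 2 = K ^ 2 := by
      rw [mul_pow, hcdef, hKdef, Real.sq_sqrt (div_pos ha hb).le,
        Real.sq_sqrt (mul_pos ha hb).le]
      field_simp
    calc c * b = Real.sqrt ((c * b) ^ 2) := (Real.sqrt_sq (by positivity)).symm
    _ = Real.sqrt (K ^ 2) := by rw [hsq]
    _ = K := Real.sqrt_sq hK.le
  have hKc : K * c = a := by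
    rw [hcdef, hKdef, ← Real.sqrt_mul (mul_pos ha hb).le]
    rw [show a * b * (a / b) = a ^ 2 by field_simp]
    exact Real.sqrt_sq ha.le
  -- the auxiliary function g
  set g : ℝ → ℝ := fun t => Real.arctan (c * z t) + K * t with hgdef
  set g' : ℝ → ℝ := fun t => 1 / (1 + (c * z t) ^ 2) * (c * z' t) + K with hg'def
  have hg : ∀ t ∈ Set.Icc t₀ t₁, HasDerivWithinAt g (g' t) (Set.Icc t₀ t₁) t := by
    intro t htm
    have h1 : HasDerivWithinAt (fun s => c * z s) (c * z' t) (Set.Icc t₀ t₁) t :=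
      (hz t htm).const_mul c
    have h2 := (Real.hasDerivAt_arctan (c * z t)).comp_hasDerivWithinAt t h1
    have h3 : HasDerivWithinAt (fun s : ℝ => K * s) K (Set.Icc t₀ t₁) t := by
      simpa using (hasDerivWithinAt_id t (Set.Icc t₀ t₁)).const_mul K
    exact h2.add h3
  have hg'le : ∀ t ∈ Set.Icc t₀ t₁, g' t ≤ 0 := by
    intro t htm
    have hD : (0:ℝ) < 1 + (c * z t) ^ 2 := by positivity
    have h1 : c * z' t ≤ c * (-a * z t ^ 2 - b) :=
      mul_le_mul_of_nonneg_left (hineq t htm) hc.le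
    have key : c * (-a * z t ^ 2 - b) = -(K * (1 + (c * z t) ^ 2)) := by
      have : c * (a * z t ^ 2 + b) = K * (1 + (c * z t) ^ 2) := by
        have hc2 : c ^ 2 = a / b := Real.sq_sqrt (div_pos ha hb).le
        have : K * (c * z t) ^ 2 = a * c * z t ^ 2 := by
          rw [mul_pow]
          nlinarith [hKc]
        nlinarith [hcb]
      nlinarith [this]
    have h2 : c * z' t ≤ -(K * (1 + (c * z t) ^ 2)) := key ▸ h1
    have : 1 / (1 + (c * z t) ^ 2) * (c * z' t) ≤ -K := by
      rw [div_mul_eq_mul_div, one_mul, div_le_iff₀ hD]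
      nlinarith
    simp only [hg'def]
    linarith
  have hanti : AntitoneOn g (Set.Icc t₀ t₁) := by
    apply antitoneOn_of_deriv_nonpos (convex_Icc t₀ t₁)
    · exact fun t htm => (hg t htm).continuousWithinAt
    · intro t htm
      rw [interior_Icc] at htm
      exact (((hg t (Set.mem_Icc_of_Ioo htm)).hasDerivAt
        (Icc_mem_nhds htm.1 htm.2)).differentiableAt).differentiableWithinAt
    · intro t htm
      rw [interior_Icc] at htm
      have := ((hg t (Set.mem_Icc_of_Ioo htm)).hasDerivAt
        (Icc_mem_nhds htm.1 htm.2)).deriv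
      rw [this]
      exact hg'le t (Set.mem_Icc_of_Ioo htm)
  have hgt := hanti (Set.left_mem_Icc.mpr ht) (Set.right_mem_Icc.mpr ht) ht
  simp only [hgdef] at hgt
  have h0 : Real.arctan (c * z t₀) < π / 2 := Real.arctan_lt_pi_div_two _
  have h1 : -(π / 2) < Real.arctan (c * z t₁) := Real.neg_pi_div_two_lt_arctan _
  have hKdt : K * (t₁ - t₀) < π := by linarith
  rw [lt_div_iff₀ hK]
  nlinarith
end

section
/- Let (φ, y, ρ, H) be a solution of the flat FLRW system on I = [t₀, T) (T ≤ ∞) satisfying the Friedmann constraint at every t ∈ I, with ρ(t) ≥ 0 on I. If V(φ(t)) → +∞ as t → T⁻, then H(t) → −∞ as t → T⁻. -/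
open Real Set Filter

/-- The interval `[t₀, T)` with possibly infinite right endpoint `T : EReal`. -/
def IcoE (t₀ : ℝ) (T : EReal) : Set ℝ := {t : ℝ | t₀ ≤ t ∧ (t : EReal) < T}

/-- The filter of real times `t → T⁻` (this is `𝓝[<] T` for finite `T`, and `atTop`
for `T = ⊤`). -/
noncomputable def leftLimFilter (T : EReal) : Filter ℝ :=
  Filter.comap (fun t : ℝ => (t : EReal)) (nhdsWithin T (Set.Iio T))

/-- The solution `(φ, y, ρ, H)` on `[t₀, T)` extends to a solution of the same system
on the set `J`. -/
def ExtendsSol (γ : ℝ) (α V : ℝ → ℝ) (t₀ : ℝ) (T : EReal)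
    (φ y ρ H : ℝ → ℝ) (J : Set ℝ) : Prop :=
  ∃ φ' y' ρ' H' : ℝ → ℝ,
    IsFLRWSolution γ α V J φ' y' ρ' H' ∧
    Set.EqOn φ φ' (IcoE t₀ T) ∧ Set.EqOn y y' (IcoE t₀ T) ∧
    Set.EqOn ρ ρ' (IcoE t₀ T) ∧ Set.EqOn H H' (IcoE t₀ T)

/-- A solution on `[t₀, T)` is right-maximal if it can be extended neither to a solution
on `[t₀, T]` (when `T` is finite) nor to a solution on `[t₀, T')` for some `T' > T`. -/
def RightMaximal (γ : ℝ) (α V : ℝ → ℝ) (t₀ : ℝ) (T : EReal)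
    (φ y ρ H : ℝ → ℝ) : Prop :=
  ¬ ((T ≠ ⊤ ∧ ExtendsSol γ α V t₀ T φ y ρ H (Set.Icc t₀ T.toReal)) ∨
     (∃ T' : EReal, T < T' ∧ ExtendsSol γ α V t₀ T φ y ρ H (IcoE t₀ T')))

/-!
The Hubble function is nonincreasing, since `H' = -(y² + γρ)/2 ≤ 0`, so it stays below
`H(t₀)`. The Friedmann constraint with `ρ ≥ 0` gives `3H² ≥ V(φ) → +∞`, so `|H| → +∞`;
a function bounded above whose absolute value diverges must tend to `-∞`.
-/

theorem convex_IcoE (t₀ : ℝ) (T : EReal) : Convex ℝ (IcoE t₀ T) := by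
  rw [convex_iff_ordConnected]
  refine ⟨fun a ha b hb x hx => ⟨ha.1.trans hx.1, ?_⟩⟩
  exact (EReal.coe_le_coe_iff.2 hx.2).trans_lt hb.2

theorem eventually_mem_IcoE {t₀ : ℝ} {T : EReal} (hT : (t₀ : EReal) < T) :
    ∀ᶠ t in leftLimFilter T, t ∈ IcoE t₀ T := by
  have hnhds : Ioi (t₀ : EReal) ∩ Iio T ∈ nhdsWithin T (Iio T) :=
    inter_mem (nhdsWithin_le_nhds (isOpen_Ioi.mem_nhds hT)) self_mem_nhdsWithin
  filter_upwards [preimage_mem_comap hnhds] with t ht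
  exact ⟨(EReal.coe_lt_coe_iff.1 ht.1).le, ht.2⟩

theorem IsFLRWSolution.antitoneOn_hubble_s9 {γ : ℝ} {α V : ℝ → ℝ} {I : Set ℝ}
    {φ y ρ H : ℝ → ℝ} (hsol : IsFLRWSolution γ α V I φ y ρ H) (hI : Convex ℝ I)
    (hγ : 0 ≤ γ) (hρ : ∀ t ∈ I, 0 ≤ ρ t) : AntitoneOn H I := by
  refine antitoneOn_of_hasDerivWithinAt_nonpos hI
    (fun t ht => (hsol t ht).2.2.2.continuousWithinAt)
    (fun t ht => ((hsol t (interior_subset ht)).2.2.2).mono interior_subset)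
    (fun t ht => ?_)
  have hsource : 0 ≤ y t ^ 2 + γ * ρ t :=
    add_nonneg (sq_nonneg _) (mul_nonneg hγ (hρ t (interior_subset ht)))
  linarith

theorem FriedmannConstraint.potential_le {V φ y ρ H : ℝ → ℝ} {t : ℝ}
    (hcon : FriedmannConstraint V φ y ρ H t) (hρ : 0 ≤ ρ t) : V (φ t) ≤ 3 * H t ^ 2 := by
  rw [hcon]
  nlinarith [sq_nonneg (y t)]

theorem Filter.tendsto_atBot_of_eventually_le_of_tendsto_sq {ι : Type*} {l : Filter ι}
    {f : ι → ℝ} {c : ℝ} (hle : ∀ᶠ x in l, f x ≤ c)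
    (hsq : Tendsto (fun x => f x ^ 2) l atTop) : Tendsto f l atBot := by
  refine tendsto_atBot.2 fun b => ?_
  set M := max |b| |c|
  filter_upwards [hle, hsq.eventually_gt_atTop (M ^ 2)] with x hxc hx
  have hM : M < |f x| := (le_abs_self M).trans_lt (sq_lt_sq.1 hx)
  rcases abs_cases (f x) with ⟨h, _⟩ | ⟨h, _⟩ <;>
    linarith [le_abs_self c, neg_abs_le b, le_max_left |b| |c|, le_max_right |b| |c|]

theorem flrw_H_diverges_of_potential_divergence_general
    (γ : ℝ) (hγ : 0 < γ)
    (α V : ℝ → ℝ)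
    (t₀ : ℝ) (T : EReal) (hT : (t₀ : EReal) < T)
    (φ y ρ H : ℝ → ℝ)
    (hsol : IsFLRWSolution γ α V (IcoE t₀ T) φ y ρ H)
    (hcon : ∀ t ∈ IcoE t₀ T, FriedmannConstraint V φ y ρ H t)
    (hρ : ∀ t ∈ IcoE t₀ T, 0 ≤ ρ t)
    (hVφ : Tendsto (fun t => V (φ t)) (leftLimFilter T) atTop) :
    Tendsto H (leftLimFilter T) atBot := by
  have hmem := eventually_mem_IcoE hT
  have hanti := hsol.antitoneOn_hubble_s9 (convex_IcoE t₀ T) hγ.le hρ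
  refine tendsto_atBot_of_eventually_le_of_tendsto_sq (c := H t₀) ?_ ?_
  · filter_upwards [hmem] with t ht
    exact hanti ⟨le_rfl, hT⟩ ht ht.1
  · have h3sq : Tendsto (fun t => 3 * H t ^ 2) (leftLimFilter T) atTop :=
      tendsto_atTop_mono' _ (hmem.mono fun t ht => (hcon t ht).potential_le (hρ t ht)) hVφ
    exact (tendsto_const_mul_atTop_of_pos three_pos).1 h3sq

/-- if `V(φ(t)) → +∞` as `t → T⁻` along a solution with `ρ ≥ 0` satisfying
the Friedmann constraint, then `H(t) → -∞` as `t → T⁻`. -/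
theorem flrw_H_diverges_of_potential_divergence
    (γ : ℝ) (hγ : 0 < γ)
    (α V : ℝ → ℝ) (hα : Continuous α) (hV : ContDiff ℝ 2 V)
    (t₀ : ℝ) (T : EReal) (hT : (t₀ : EReal) < T)
    (φ y ρ H : ℝ → ℝ)
    (hsol : IsFLRWSolution γ α V (IcoE t₀ T) φ y ρ H)
    (hcon : ∀ t ∈ IcoE t₀ T, FriedmannConstraint V φ y ρ H t)
    (hρ : ∀ t ∈ IcoE t₀ T, 0 ≤ ρ t)
    (hVφ : Tendsto (fun t => V (φ t)) (leftLimFilter T) atTop) :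
    Tendsto H (leftLimFilter T) atBot :=
  flrw_H_diverges_of_potential_divergence_general γ hγ α V t₀ T hT φ y ρ H hsol hcon hρ hVφ
end

section
/- Let (φ, y, ρ, H) be a solution of the flat FLRW system on an interval I with ρ(t) ≥ 0 on I, let t₀ ∈ I with H(t₀) < 0, and suppose there exists δ > 0 such that y(t)² + γρ(t) ≥ 2δ·H(t)² for all t ∈ I with t ≥ t₀. Then every t ∈ I with t ≥ t₀ satisfies t < t₀ − 1/(δ·H(t₀)); in particular the interval of existence to the right of t₀ has length less than 1/(δ|H(t₀)|). -/
open Real Set Filter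

/-- if `H(t₀) < 0` and `y² + γρ ≥ 2δH²` for `t ≥ t₀`, then every time
`t ≥ t₀` in the interval of existence satisfies `t < t₀ - 1/(δ H(t₀))`; in particular
the interval of existence to the right of `t₀` has length less than `1/(δ|H(t₀)|)`. -/
theorem flrw_existence_time_bound
    (γ : ℝ) (hγ : 0 < γ)
    (α V : ℝ → ℝ) (hα : Continuous α) (hV : ContDiff ℝ 2 V)
    (I : Set ℝ) (hI : Convex ℝ I) (φ y ρ H : ℝ → ℝ)
    (hsol : IsFLRWSolution γ α V I φ y ρ H)
    (hρ : ∀ t ∈ I, 0 ≤ ρ t)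
    (t₀ : ℝ) (ht₀ : t₀ ∈ I) (hH₀ : H t₀ < 0)
    (δ : ℝ) (hδ : 0 < δ)
    (hbd : ∀ t ∈ I, t₀ ≤ t → 2 * δ * H t ^ 2 ≤ y t ^ 2 + γ * ρ t) :
    ∀ t ∈ I, t₀ ≤ t → t < t₀ - 1 / (δ * H t₀) := by
  set J : Set ℝ := I ∩ Ici t₀ with hJdef
  have hJconv : Convex ℝ J := hI.inter (convex_Ici t₀)
  have hJI : J ⊆ I := inter_subset_left
  have hintJ : interior J ⊆ interior I ∩ Ioi t₀ := by
    rw [hJdef, interior_inter, interior_Ici]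
  have ht₀J : t₀ ∈ J := ⟨ht₀, self_mem_Ici⟩
  have hHcont : ContinuousOn H J := fun t ht =>
    ((hsol t (hJI ht)).2.2.2.continuousWithinAt).mono hJI
  have hderivH : ∀ x ∈ interior J, HasDerivAt H (-(1/2) * (y x ^ 2 + γ * ρ x)) x := by
    intro x hx
    obtain ⟨hxI, -⟩ := hintJ hx
    exact ((hsol x (interior_subset hxI)).2.2.2).hasDerivAt
      (mem_interior_iff_mem_nhds.mp hxI)
  have hHanti : AntitoneOn H J := by
    apply antitoneOn_of_deriv_nonpos hJconv hHcont
    · intro x hx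
      exact (hderivH x hx).differentiableAt.differentiableWithinAt
    · intro x hx
      rw [(hderivH x hx).deriv]
      have hρx : 0 ≤ ρ x := hρ x (hJI (interior_subset hx))
      nlinarith [sq_nonneg (y x)]
  have hHneg : ∀ t ∈ J, H t < 0 := fun t ht =>
    lt_of_le_of_lt (hHanti ht₀J ht ht.2) hH₀
  have hHne : ∀ t ∈ J, H t ≠ 0 := fun t ht => (hHneg t ht).ne
  -- the auxiliary function g = 1/H - δ t is monotone on J
  set g : ℝ → ℝ := fun t => (H t)⁻¹ - δ * t with hgdef
  have hgderiv : ∀ x ∈ interior J,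
      HasDerivAt g (-(-(1/2) * (y x ^ 2 + γ * ρ x)) / H x ^ 2 - δ) x := by
    intro x hx
    exact ((hderivH x hx).inv (hHne x (interior_subset hx))).sub
      ((hasDerivAt_id x).const_mul δ |>.congr_deriv (mul_one δ))
  have hgmono : MonotoneOn g J := by
    apply monotoneOn_of_deriv_nonneg hJconv
    · exact (hHcont.inv₀ hHne).sub (continuous_const.mul continuous_id).continuousOn
    · intro x hx
      exact (hgderiv x hx).differentiableAt.differentiableWithinAt
    · intro x hx
      rw [(hgderiv x hx).deriv]
      have hxJ : x ∈ J := interior_subset hx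
      have h2 : (0:ℝ) < H x ^ 2 := by nlinarith [hHneg x hxJ]
      rw [sub_nonneg, le_div_iff₀ h2]
      have := hbd x (hJI hxJ) hxJ.2
      nlinarith
  intro t ht hts
  have htJ : t ∈ J := ⟨ht, hts⟩
  have hg : g t₀ ≤ g t := hgmono ht₀J htJ hts
  have hinvt : (H t)⁻¹ < 0 := inv_lt_zero.mpr (hHneg t htJ)
  have h3 : 1 / (δ * H t₀) = (H t₀)⁻¹ / δ := by
    rw [one_div, mul_inv]; ring
  rw [h3, lt_sub_iff_add_lt]
  simp only [hgdef] at hg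
  have key : δ * (t + (H t₀)⁻¹ / δ) < δ * t₀ := by
    have hdiv : δ * ((H t₀)⁻¹ / δ) = (H t₀)⁻¹ := mul_div_cancel₀ _ hδ.ne'
    nlinarith
  exact (mul_lt_mul_iff_right₀ hδ).mp key
end

section
/- Assume 0 < γ ≤ 2. Let (φ, y, ρ, H) be a solution of the flat FLRW system on an interval containing [a, b], satisfying the Friedmann constraint at every t ∈ [a, b], and suppose V(φ(t)) ≤ V̄ for all t ∈ [a, b]. Let z : [a, b] → ℝ solve the Riccati equation z'(t) = (γ/2)(V̄ − 3z(t)²) with z(a) = H(a). Then H(t) ≤ z(t) for all t ∈ [a, b]. -/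
open Real Set Filter

/-- comparison with the Riccati equation: if `V(φ(t)) ≤ V̄` on `[a, b]` and
`z` solves `z' = (γ/2)(V̄ - 3z²)` with `z(a) = H(a)`, then `H ≤ z` on `[a, b]`. -/
theorem flrw_riccati_comparison
    (γ : ℝ) (hγ : 0 < γ) (hγ2 : γ ≤ 2)
    (α V : ℝ → ℝ) (hα : Continuous α) (hV : ContDiff ℝ 2 V)
    (I : Set ℝ) (hI : Convex ℝ I) (φ y ρ H : ℝ → ℝ)
    (hsol : IsFLRWSolution γ α V I φ y ρ H)
    (a b : ℝ) (hab : a ≤ b) (hIab : Set.Icc a b ⊆ I)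
    (hcon : ∀ t ∈ Set.Icc a b, FriedmannConstraint V φ y ρ H t)
    (Vbar : ℝ) (hbound : ∀ t ∈ Set.Icc a b, V (φ t) ≤ Vbar)
    (z : ℝ → ℝ)
    (hz : ∀ t ∈ Set.Icc a b,
      HasDerivWithinAt z ((γ/2) * (Vbar - 3 * z t ^ 2)) (Set.Icc a b) t)
    (hza : z a = H a) :
    ∀ t ∈ Set.Icc a b, H t ≤ z t := by

  -- Derivative of `H` within `Icc a b`.
  have hHd : ∀ x ∈ Set.Icc a b, HasDerivWithinAt H (-(1/2) * (y x ^ 2 + γ * ρ x)) (Set.Icc a b) x :=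
    fun x hx => ((hsol x (hIab hx)).2.2.2).mono hIab
  have hHc : ContinuousOn H (Set.Icc a b) := fun x hx => (hHd x hx).continuousWithinAt
  have hzc : ContinuousOn z (Set.Icc a b) := fun x hx => (hz x hx).continuousWithinAt
  -- Bound on `|z + H|` on the compact interval.
  obtain ⟨M, hM⟩ := isCompact_Icc.exists_bound_of_continuousOn (hzc.add hHc)
  set K : ℝ := 3 * γ / 2 * M + 1 with hK
  -- Key inequality: `H' ≤ (γ/2)(V̄ - 3H²)`.
  have key : ∀ x ∈ Set.Icc a b, -(1/2) * (y x ^ 2 + γ * ρ x) ≤ γ/2 * (Vbar - 3 * H x ^ 2) := by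
    intro x hx
    have h1 := hcon x hx
    have h2 := hbound x hx
    unfold FriedmannConstraint at h1
    nlinarith [sq_nonneg (y x), mul_nonneg hγ.le (sq_nonneg (y x))]
  -- Passing to right derivatives.
  have hmem : ∀ x ∈ Set.Ico a b, Set.Icc a b ∈ nhdsWithin x (Set.Ici x) := by
    intro x hx
    rw [mem_nhdsWithin]
    exact ⟨Set.Iio b, isOpen_Iio, hx.2, fun s hs => ⟨hx.1.trans hs.2, hs.1.le⟩⟩
  -- For each ε > 0, the barrier `z + ε exp (K (· - a))` dominates `H`.
  have hsuff : ∀ ε > (0:ℝ), ∀ t ∈ Set.Icc a b, H t ≤ z t + ε * Real.exp (K * (t - a)) := by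
    intro ε hε
    refine image_le_of_deriv_right_lt_deriv_boundary'
      (f' := fun x => -(1/2) * (y x ^ 2 + γ * ρ x))
      (B := fun s => z s + ε * Real.exp (K * (s - a)))
      (B' := fun x => (γ/2) * (Vbar - 3 * z x ^ 2) + ε * (K * Real.exp (K * (x - a))))
      hHc ?_ ?_ ?_ ?_ ?_
    · intro x hx
      exact (hHd x (Set.Ico_subset_Icc_self hx)).mono_of_mem_nhdsWithin (hmem x hx)
    · simp [hza, hε.le]
    · refine hzc.add (Continuous.continuousOn ?_)
      exact continuous_const.mul ((Real.continuous_exp.comp (continuous_const.mul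
        (continuous_id.sub continuous_const))))
    · intro x hx
      refine ((hz x (Set.Ico_subset_Icc_self hx)).mono_of_mem_nhdsWithin (hmem x hx)).add ?_
      have : HasDerivAt (fun s => ε * Real.exp (K * (s - a))) (ε * (K * Real.exp (K * (x - a)))) x := by
        have h1 : HasDerivAt (fun s : ℝ => K * (s - a)) K x := by
          simpa using ((hasDerivAt_id x).sub_const a).const_mul K
        have h2 := (Real.hasDerivAt_exp (K * (x - a))).comp x h1
        simpa [mul_comm, mul_left_comm] using h2.const_mul ε
      exact this.hasDerivWithinAt
    · intro x hx heq
      have hxI := Set.Ico_subset_Icc_self hx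
      have hk := key x hxI
      have hMx := hM x hxI
      have hexp : (0:ℝ) < Real.exp (K * (x - a)) := Real.exp_pos _
      have habs : |z x + H x| ≤ M := by simpa using hMx
      have h1 : z x + H x ≤ M := (abs_le.1 habs).2
      have heq' : H x = z x + ε * Real.exp (K * (x - a)) := heq
      have hHz : H x - z x = ε * Real.exp (K * (x - a)) := by rw [heq']; ring
      refine lt_of_le_of_lt hk ?_
      show γ/2 * (Vbar - 3 * H x ^ 2)
          < γ/2 * (Vbar - 3 * z x ^ 2) + ε * (K * Real.exp (K * (x - a)))
      have h2 : -(z x + H x) ≤ M := by linarith [(abs_le.1 habs).1]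
      have h3 : (3*γ/2) * (z x ^ 2 - H x ^ 2)
          = (3*γ/2) * (-(z x + H x)) * (ε * Real.exp (K * (x - a))) := by rw [← hHz]; ring
      have hfact : (3*γ/2) * (-(z x + H x)) * (ε * Real.exp (K * (x - a)))
          ≤ (3*γ/2) * M * (ε * Real.exp (K * (x - a))) := by
        apply mul_le_mul_of_nonneg_right (mul_le_mul_of_nonneg_left h2 (by positivity))
        positivity
      have hKe : ε * (K * Real.exp (K * (x - a)))
          = (3*γ/2) * M * (ε * Real.exp (K * (x - a))) + ε * Real.exp (K * (x - a)) := by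
        rw [hK]; ring
      nlinarith [h3, hfact, hKe, mul_pos hε hexp]
  -- Let ε → 0.
  intro t ht
  by_contra hlt
  push_neg at hlt
  have hd : 0 < H t - z t := sub_pos.2 hlt
  have hexp : (0:ℝ) < Real.exp (K * (t - a)) := Real.exp_pos _
  have := hsuff ((H t - z t) / (2 * Real.exp (K * (t - a)))) (by positivity) t ht
  have hsimp : (H t - z t) / (2 * Real.exp (K * (t - a))) * Real.exp (K * (t - a))
      = (H t - z t) / 2 := by
    field_simp
  rw [hsimp] at this
  linarith
end

section
/- (Proposition: case φ → +∞ with negative limiting potential.) Assume 0 < γ ≤ 2. Let (φ, y, ρ, H) be a right-maximal solution of the flat FLRW system on I = [t₀, T) satisfying the Friedmann constraint at every t ∈ I, with ρ(t₀) ≥ 0. Suppose φ(t) → +∞ as t → T⁻ and limsup_{ψ→+∞} V(ψ) < 0 (which holds in particular if V(ψ) → V_∞ with V_∞ < 0 or V_∞ = −∞ as ψ → +∞). Then T < ∞ and H(t) → −∞ as t → T⁻. -/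
open Real Set Filter
open scoped Topology

/-!
The density `ρ` solves a linear equation, so it stays nonnegative; then `φ + H - t/2` is
nonincreasing (its derivative is `-(y - 1)²/2 - γρ/2`), so `φ → +∞` forces `H → -∞` at any
finite `T`. For `T = ∞`, once
`V(φ) ≤ c < 0` the Friedmann constraint and `γ ≤ 2` give the Riccati inequality
`H' ≤ -(3γ/2) H² + γc/2`: `H` first decreases linearly until it is negative, and then
`(3γ/2) t - 1/H` is nonincreasing, so `H` reaches `-∞` in finite time.
-/

theorem IcoE_coe (t₀ T : ℝ) : IcoE t₀ T = Ico t₀ T := by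
  ext t
  simp [IcoE]

theorem IcoE_top (t₀ : ℝ) : IcoE t₀ ⊤ = Ici t₀ := by
  ext t
  simp [IcoE]

theorem leftLimFilter_coe (x : ℝ) : leftLimFilter (x : EReal) = 𝓝[<] x := by
  have hpre : (fun t : ℝ => (t : EReal)) ⁻¹' (Iio (x : EReal)) = Iio x := by
    ext t
    simp
  rw [leftLimFilter, nhdsWithin, comap_inf, comap_principal, hpre, EReal.nhds_coe,
    comap_map EReal.coe_injective, nhdsWithin]

theorem leftLimFilter_top : leftLimFilter (⊤ : EReal) = atTop := by
  have hIio : Iio (⊤ : EReal) = {(⊤ : EReal)}ᶜ := by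
    ext z
    simp [lt_top_iff_ne_top]
  rw [leftLimFilter, hIio, EReal.nhdsWithin_top, comap_map EReal.coe_injective]

theorem exists_neg_eventually_lt_of_limsup_lt_zero {ι : Type*} {l : Filter ι} {f : ι → ℝ}
    (h : limsup (fun x => (f x : EReal)) l < 0) : ∃ c < 0, ∀ᶠ x in l, f x < c := by
  obtain ⟨r, hr, hr0⟩ := exists_between h
  lift r to ℝ using ⟨(hr0.trans_le le_top).ne, (bot_le.trans_lt hr).ne'⟩
  exact ⟨r, by exact_mod_cast hr0, (eventually_lt_of_limsup_lt hr).mono fun x hx => by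
    exact_mod_cast hx⟩

theorem Convex.antitoneOn_of_hasDerivWithinAt_nonpos {D : Set ℝ} (hD : Convex ℝ D)
    {f f' : ℝ → ℝ} (hf : ∀ x ∈ D, HasDerivWithinAt f (f' x) D x) (hf' : ∀ x ∈ D, f' x ≤ 0) :
    AntitoneOn f D :=
  _root_.antitoneOn_of_hasDerivWithinAt_nonpos hD (fun x hx => (hf x hx).continuousWithinAt)
    (fun x hx => (hf x (interior_subset hx)).mono interior_subset)
    fun x hx => hf' x (interior_subset hx)

/-- Otherwise `f` has a zero in `[a, b]`, after which Grönwall forces it to vanish. -/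
theorem Convex.nonneg_of_hasDerivWithinAt_mul {D : Set ℝ} (hD : Convex ℝ D) {f g : ℝ → ℝ}
    (hg : ContinuousOn g D) (hf : ∀ t ∈ D, HasDerivWithinAt f (g t * f t) D t)
    {a b : ℝ} (ha : a ∈ D) (hb : b ∈ D) (hab : a ≤ b) (hfa : 0 ≤ f a) : 0 ≤ f b := by
  by_contra! hfb
  have hsub : Icc a b ⊆ D := hD.ordConnected.out ha hb
  obtain ⟨u, hu, hfu⟩ : ∃ u ∈ Icc a b, f u = 0 :=
    intermediate_value_Icc' hab (fun t ht => (hf t (hsub ht)).continuousWithinAt.mono hsub)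
      ⟨hfb.le, hfa⟩
  have hsub' : Icc u b ⊆ D := (Icc_subset_Icc_left hu.1).trans hsub
  obtain ⟨K, hK⟩ := isCompact_Icc.exists_bound_of_continuousOn (hg.mono hsub')
  have hzero := eq_zero_of_abs_deriv_le_mul_abs_self_of_eq_zero_right (K := K)
    (fun t ht => (hf t (hsub' ht)).continuousWithinAt.mono hsub')
    (fun t ht => ((hf t (hsub' (Ico_subset_Icc_self ht))).mono hsub').mono_of_mem_nhdsWithin
      (Icc_mem_nhdsGE_of_mem ht))
    hfu (fun t ht => by
      rw [norm_mul]
      gcongr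
      exact hK t (Ico_subset_Icc_self ht)) b ⟨hu.2, le_rfl⟩
  exact hfb.ne hzero

/-- `a - (κ * h a)⁻¹` is the blow-up time of the solution of `h' = -κ h²` through `(a, h a)`. -/
theorem lt_of_hasDerivWithinAt_le_neg_mul_sq {h h' : ℝ → ℝ} {κ a b : ℝ} (hκ : 0 < κ)
    (hd : ∀ t ∈ Icc a b, HasDerivWithinAt h (h' t) (Icc a b) t)
    (hle : ∀ t ∈ Icc a b, h' t ≤ -κ * h t ^ 2) (ha : h a < 0) : b < a - (κ * h a)⁻¹ := by
  by_contra! hb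
  set s := a - (κ * h a)⁻¹ with hs_def
  have has : a ≤ s := by
    have : (κ * h a)⁻¹ < 0 := inv_lt_zero.2 (mul_neg_of_pos_of_neg hκ ha)
    linarith
  have hab : a ≤ b := has.trans hb
  have hanti : AntitoneOn h (Icc a b) :=
    (convex_Icc a b).antitoneOn_of_hasDerivWithinAt_nonpos hd fun t ht =>
      (hle t ht).trans (by nlinarith [sq_nonneg (h t)])
  have hneg : ∀ t ∈ Icc a b, h t < 0 := fun t ht =>
    (hanti (left_mem_Icc.2 hab) ht ht.1).trans_lt ha
  have hinv : AntitoneOn (fun t => κ * t - (h t)⁻¹) (Icc a b) :=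
    (convex_Icc a b).antitoneOn_of_hasDerivWithinAt_nonpos
      (fun t ht => ((hasDerivWithinAt_id t _).const_mul κ).sub ((hd t ht).inv (hneg t ht).ne))
      fun t ht => by
        have hκle : κ ≤ -h' t / h t ^ 2 := by
          rw [le_div_iff₀ (sq_pos_of_neg (hneg t ht))]
          linarith [hle t ht]
        simp only [mul_one]
        linarith
  have hsab : s ∈ Icc a b := ⟨has, hb⟩
  have key := hinv (left_mem_Icc.2 hab) hsab has
  have hκs : κ * s = κ * a - (h a)⁻¹ := by
    rw [hs_def, mul_sub, mul_inv, ← mul_assoc, mul_inv_cancel₀ hκ.ne', one_mul]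
  have : (h s)⁻¹ < 0 := inv_lt_zero.2 (hneg s hsab)
  simp only at key
  linarith

theorem false_of_hasDerivWithinAt_Ici_le_neg_mul_sq_sub {h h' : ℝ → ℝ} {κ ε a : ℝ}
    (hκ : 0 < κ) (hε : 0 < ε) (hd : ∀ t ∈ Ici a, HasDerivWithinAt h (h' t) (Ici a) t)
    (hle : ∀ t ∈ Ici a, h' t ≤ -κ * h t ^ 2 - ε) : False := by
  have hlin : AntitoneOn (fun t => h t + ε * t) (Ici a) :=
    (convex_Ici a).antitoneOn_of_hasDerivWithinAt_nonpos
      (fun t ht => (hd t ht).add ((hasDerivWithinAt_id t _).const_mul ε))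
      fun t ht => by nlinarith [hle t ht, sq_nonneg (h t)]
  set t₁ := a + (|h a| + 1) / ε with ht₁
  have hat₁ : a ≤ t₁ := le_add_of_nonneg_right (by positivity)
  have hneg : h t₁ < 0 := by
    have hdrop := hlin (le_refl a) hat₁ hat₁
    have hε' : ε * ((|h a| + 1) / ε) = |h a| + 1 := mul_div_cancel₀ _ hε.ne'
    simp only [ht₁, mul_add] at hdrop
    linarith [le_abs_self (h a)]
  have hsub : Icc t₁ (t₁ - (κ * h t₁)⁻¹) ⊆ Ici a :=
    Icc_subset_Ici_self.trans (Ici_subset_Ici.2 hat₁)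
  exact lt_irrefl _ (lt_of_hasDerivWithinAt_le_neg_mul_sq hκ
    (fun t ht => (hd t (hsub ht)).mono hsub)
    (fun t ht => (hle t (hsub ht)).trans (by linarith)) hneg)

theorem FriedmannConstraint.hubble_deriv_le {γ c : ℝ} {V φ y ρ H : ℝ → ℝ} {t : ℝ}
    (hcon : FriedmannConstraint V φ y ρ H t) (hγ : 0 ≤ γ) (hγ2 : γ ≤ 2) (hV : V (φ t) ≤ c) :
    -(1/2) * (y t ^ 2 + γ * ρ t) ≤ -(3 * γ / 2) * H t ^ 2 + γ * c / 2 := by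
  rw [FriedmannConstraint] at hcon
  nlinarith [mul_nonneg hγ (sub_nonneg.2 hV), mul_nonneg (sub_nonneg.2 hγ2) (sq_nonneg (y t))]

namespace IsFLRWSolution

variable {γ : ℝ} {α V : ℝ → ℝ} {φ y ρ H : ℝ → ℝ}

theorem density_nonneg_s12 {I : Set ℝ} (hsol : IsFLRWSolution γ α V I φ y ρ H) (hI : Convex ℝ I)
    (hα : Continuous α) {a b : ℝ} (ha : a ∈ I) (hb : b ∈ I) (hab : a ≤ b) (hρa : 0 ≤ ρ a) :
    0 ≤ ρ b := by
  have hφ : ContinuousOn φ I := fun t ht => (hsol t ht).1.continuousWithinAt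
  have hy : ContinuousOn y I := fun t ht => (hsol t ht).2.1.continuousWithinAt
  have hH : ContinuousOn H I := fun t ht => (hsol t ht).2.2.2.continuousWithinAt
  exact hI.nonneg_of_hasDerivWithinAt_mul (g := fun t => -(3 * γ * H t + α (φ t) * y t))
    ((continuousOn_const.mul hH).add ((hα.comp_continuousOn hφ).mul hy)).neg
    (fun t ht => (hsol t ht).2.2.1.congr_deriv (by ring)) ha hb hab hρa

theorem antitoneOn_field_add_hubble_sub_half_time {I : Set ℝ}
    (hsol : IsFLRWSolution γ α V I φ y ρ H) (hI : Convex ℝ I) (hγ : 0 ≤ γ)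
    (hρ : ∀ t ∈ I, 0 ≤ ρ t) : AntitoneOn (fun t => φ t + H t - t / 2) I :=
  hI.antitoneOn_of_hasDerivWithinAt_nonpos
    (fun t ht =>
      ((hsol t ht).1.add (hsol t ht).2.2.2).sub ((hasDerivWithinAt_id t I).div_const 2))
    fun t ht => by nlinarith [sq_nonneg (y t - 1), mul_nonneg hγ (hρ t ht)]

theorem tendsto_hubble_atBot {t₀ T : ℝ} (hsol : IsFLRWSolution γ α V (Ico t₀ T) φ y ρ H)
    (hγ : 0 ≤ γ) (hT : t₀ < T) (hρ : ∀ t ∈ Ico t₀ T, 0 ≤ ρ t)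
    (hφ : Tendsto φ (𝓝[<] T) atTop) : Tendsto H (𝓝[<] T) atBot := by
  have hanti := hsol.antitoneOn_field_add_hubble_sub_half_time (convex_Ico t₀ T) hγ hρ
  set C := φ t₀ + H t₀ - t₀ / 2 + T / 2 with hC
  have hle : ∀ᶠ t in 𝓝[<] T, H t ≤ C + -φ t := by
    filter_upwards [Ico_mem_nhdsLT hT] with t ht
    have := hanti (left_mem_Ico.2 hT) ht ht.1
    simp only at this
    linarith [ht.2, hC]
  exact tendsto_atBot_mono' _ hle
    (tendsto_atBot_add_const_left _ C (tendsto_neg_atTop_atBot.comp hφ))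

theorem lt_top_of_eventually_potential_le {t₀ c : ℝ} {T : EReal}
    (hsol : IsFLRWSolution γ α V (IcoE t₀ T) φ y ρ H) (hγ : 0 < γ) (hγ2 : γ ≤ 2)
    (hcon : ∀ t ∈ IcoE t₀ T, FriedmannConstraint V φ y ρ H t) (hc : c < 0)
    (hV : ∀ᶠ t in leftLimFilter T, V (φ t) ≤ c) : T < ⊤ := by
  refine lt_top_iff_ne_top.2 fun hT => ?_
  subst hT
  rw [IcoE_top] at hsol hcon
  rw [leftLimFilter_top] at hV
  obtain ⟨a, ha⟩ := eventually_atTop.1 (hV.and (eventually_ge_atTop t₀))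
  have hsub : Ici a ⊆ Ici t₀ := Ici_subset_Ici.2 (ha a le_rfl).2
  refine false_of_hasDerivWithinAt_Ici_le_neg_mul_sq_sub (a := a) (κ := 3 * γ / 2)
    (ε := -(γ * c / 2)) (by positivity) (by nlinarith)
    (fun t ht => ((hsol t (hsub ht)).2.2.2).mono hsub) fun t ht => ?_
  have := (hcon t (hsub ht)).hubble_deriv_le hγ.le hγ2 (ha t ht).1
  linarith

end IsFLRWSolution

theorem flrw_recollapse_of_negative_limiting_potential_general
    (γ : ℝ) (hγ : 0 < γ) (hγ2 : γ ≤ 2)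
    (α V : ℝ → ℝ) (hα : Continuous α)
    (t₀ : ℝ) (T : EReal) (hT : (t₀ : EReal) < T)
    (φ y ρ H : ℝ → ℝ)
    (hsol : IsFLRWSolution γ α V (IcoE t₀ T) φ y ρ H)
    (hcon : ∀ t ∈ IcoE t₀ T, FriedmannConstraint V φ y ρ H t)
    (hρ₀ : 0 ≤ ρ t₀)
    (hφ : Tendsto φ (leftLimFilter T) atTop)
    (hVsup : Filter.limsup (fun ψ => (V ψ : EReal)) atTop < 0) :
    T < ⊤ ∧ Tendsto H (leftLimFilter T) atBot := by
  obtain ⟨c, hc, hV⟩ := exists_neg_eventually_lt_of_limsup_lt_zero hVsup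
  have hTtop : T < ⊤ := hsol.lt_top_of_eventually_potential_le hγ hγ2 hcon hc
    ((hφ.eventually hV).mono fun _ => le_of_lt)
  refine ⟨hTtop, ?_⟩
  obtain ⟨T, rfl⟩ : ∃ T' : ℝ, (T' : EReal) = T :=
    ⟨T.toReal, EReal.coe_toReal hTtop.ne hT.ne_bot⟩
  rw [IcoE_coe] at hsol
  rw [leftLimFilter_coe] at hφ ⊢
  have hT : t₀ < T := EReal.coe_lt_coe_iff.1 hT
  exact hsol.tendsto_hubble_atBot hγ.le hT
    (fun t ht => hsol.density_nonneg_s12 (convex_Ico t₀ T) hα (left_mem_Ico.2 hT) ht ht.1 hρ₀) hφ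

/-- if `φ(t) → +∞` as `t → T⁻` along a right-maximal solution and
`limsup_{ψ→+∞} V(ψ) < 0`, then `T < ∞` and `H(t) → -∞` as `t → T⁻`. -/
theorem flrw_recollapse_of_negative_limiting_potential
    (γ : ℝ) (hγ : 0 < γ) (hγ2 : γ ≤ 2)
    (α V : ℝ → ℝ) (hα : Continuous α) (hV : ContDiff ℝ 2 V)
    (t₀ : ℝ) (T : EReal) (hT : (t₀ : EReal) < T)
    (φ y ρ H : ℝ → ℝ)
    (hsol : IsFLRWSolution γ α V (IcoE t₀ T) φ y ρ H)
    (hmax : RightMaximal γ α V t₀ T φ y ρ H)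
    (hcon : ∀ t ∈ IcoE t₀ T, FriedmannConstraint V φ y ρ H t)
    (hρ₀ : 0 ≤ ρ t₀)
    (hφ : Tendsto φ (leftLimFilter T) atTop)
    (hVsup : Filter.limsup (fun ψ => (V ψ : EReal)) atTop < 0) :
    T < ⊤ ∧ Tendsto H (leftLimFilter T) atBot :=
  flrw_recollapse_of_negative_limiting_potential_general γ hγ hγ2 α V hα t₀ T hT φ y ρ H hsol hcon
    hρ₀ hφ hVsup
end

section
/- Let (φ, y, ρ, H) be a solution of the flat FLRW system on I = [t₀, T) with T < ∞ and ρ(t) ≥ 0 on I, and suppose H is bounded below on I. Then φ is bounded on I and the limit lim_{t→T⁻} φ(t) exists in ℝ. -/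
open Real Set Filter

/-- on a finite interval `[t₀, T)` with `ρ ≥ 0` and `H` bounded below,
the scalar field is bounded and converges to a finite limit as `t → T⁻`. -/
theorem flrw_scalar_field_converges
    (γ : ℝ) (hγ : 0 < γ)
    (α V : ℝ → ℝ) (hα : Continuous α) (hV : ContDiff ℝ 2 V)
    (t₀ T : ℝ) (ht₀T : t₀ < T)
    (φ y ρ H : ℝ → ℝ)
    (hsol : IsFLRWSolution γ α V (Set.Ico t₀ T) φ y ρ H)
    (hρ : ∀ t ∈ Set.Ico t₀ T, 0 ≤ ρ t)
    (hHbdd : ∃ m : ℝ, ∀ t ∈ Set.Ico t₀ T, m ≤ H t) :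
    (∃ M : ℝ, ∀ t ∈ Set.Ico t₀ T, |φ t| ≤ M) ∧
    (∃ L : ℝ, Tendsto φ (nhdsWithin T (Set.Iio T)) (nhds L)) := by
  obtain ⟨m, hm⟩ := hHbdd
  have hφc : ContinuousOn φ (Set.Ico t₀ T) := fun u hu => ((hsol u hu).1).continuousWithinAt
  have hyc : ContinuousOn y (Set.Ico t₀ T) := fun u hu => ((hsol u hu).2.1).continuousWithinAt
  have hρc : ContinuousOn ρ (Set.Ico t₀ T) := fun u hu => ((hsol u hu).2.2.1).continuousWithinAt
  have hmemn : ∀ u ∈ Set.Ioo t₀ T, Set.Ico t₀ T ∈ nhds u := fun u hu =>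
    mem_nhds_iff.mpr ⟨Set.Ioo t₀ T, Set.Ioo_subset_Ico_self, isOpen_Ioo, hu⟩
  have hφ' : ∀ u ∈ Set.Ioo t₀ T, HasDerivAt φ (y u) u := fun u hu =>
    ((hsol u (Set.Ioo_subset_Ico_self hu)).1).hasDerivAt (hmemn u hu)
  have hH' : ∀ u ∈ Set.Ioo t₀ T, HasDerivAt H (-(1/2) * (y u ^ 2 + γ * ρ u)) u := fun u hu =>
    ((hsol u (Set.Ioo_subset_Ico_self hu)).2.2.2).hasDerivAt (hmemn u hu)
  have hHc : ContinuousOn H (Set.Ico t₀ T) := fun u hu => ((hsol u hu).2.2.2).continuousWithinAt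
  -- key estimate
  have key : ∀ s, t₀ ≤ s → ∀ t, s ≤ t → t < T →
      (φ t - φ s) ^ 2 ≤ 2 * (t - s) * (H s - H t) := by
    intro s hs t hst htT
    have hsub : Set.Icc s t ⊆ Set.Ico t₀ T := fun u hu =>
      ⟨le_trans hs hu.1, lt_of_le_of_lt hu.2 htT⟩
    have hsubIoo : Set.Ioo s t ⊆ Set.Ioo t₀ T := fun u hu =>
      ⟨lt_of_le_of_lt hs hu.1, lt_trans hu.2 htT⟩
    have hyci : ContinuousOn y (Set.Icc s t) := hyc.mono hsub
    have hρci : ContinuousOn ρ (Set.Icc s t) := hρc.mono hsub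
    have hyint : IntervalIntegrable y MeasureTheory.volume s t := by
      apply ContinuousOn.intervalIntegrable; rwa [Set.uIcc_of_le hst]
    have hy2int : IntervalIntegrable (fun u => y u ^ 2) MeasureTheory.volume s t := by
      apply ContinuousOn.intervalIntegrable; rw [Set.uIcc_of_le hst]; exact hyci.pow 2
    have hgint : IntervalIntegrable (fun u => y u ^ 2 + γ * ρ u) MeasureTheory.volume s t := by
      apply ContinuousOn.intervalIntegrable; rw [Set.uIcc_of_le hst]
      exact (hyci.pow 2).add (continuousOn_const.mul hρci)
    have hφeq : (∫ u in s..t, y u) = φ t - φ s :=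
      intervalIntegral.integral_eq_sub_of_hasDerivAt_of_le hst (hφc.mono hsub)
        (fun u hu => hφ' u (hsubIoo hu)) hyint
    have hHeq : (∫ u in s..t, -(1/2) * (y u ^ 2 + γ * ρ u)) = H t - H s :=
      intervalIntegral.integral_eq_sub_of_hasDerivAt_of_le hst (hHc.mono hsub)
        (fun u hu => hH' u (hsubIoo hu)) (hgint.const_mul _)
    set A := ∫ u in s..t, y u with hA
    set B := ∫ u in s..t, y u ^ 2 with hB
    have hB_le : B ≤ 2 * (H s - H t) := by
      have h1 : B ≤ ∫ u in s..t, (y u ^ 2 + γ * ρ u) := by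
        apply intervalIntegral.integral_mono_on hst hy2int hgint
        intro u hu
        have := hρ u (hsub hu)
        nlinarith
      have h2 : (∫ u in s..t, (y u ^ 2 + γ * ρ u)) = 2 * (H s - H t) := by
        have h3 : (∫ u in s..t, -(1/2) * (y u ^ 2 + γ * ρ u))
            = -(1/2) * ∫ u in s..t, (y u ^ 2 + γ * ρ u) :=
          intervalIntegral.integral_const_mul _ _
        rw [hHeq] at h3
        linarith
      linarith
    have hCS : (t - s) * A ^ 2 ≤ (t - s) ^ 2 * B := by
      have hnn : 0 ≤ ∫ u in s..t, ((t - s) * y u - A) ^ 2 :=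
        intervalIntegral.integral_nonneg hst (fun u _ => sq_nonneg _)
      have hexp : (∫ u in s..t, ((t - s) * y u - A) ^ 2)
          = (t - s) ^ 2 * B - (2 * (t - s) * A) * A + (t - s) * A ^ 2 := by
        have heq : ∀ u, ((t - s) * y u - A) ^ 2
            = (t - s) ^ 2 * y u ^ 2 - 2 * (t - s) * A * y u + A ^ 2 := fun u => by ring
        simp_rw [heq]
        rw [intervalIntegral.integral_add ((hy2int.const_mul _).sub (hyint.const_mul _))
              intervalIntegrable_const,
            intervalIntegral.integral_sub (hy2int.const_mul _) (hyint.const_mul _),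
            intervalIntegral.integral_const_mul, intervalIntegral.integral_const_mul,
            intervalIntegral.integral_const]
        rw [← hA, ← hB]
        simp only [smul_eq_mul]
      nlinarith
    have hφt : (φ t - φ s) ^ 2 = A ^ 2 := by rw [hφeq]
    rcases eq_or_lt_of_le hst with h | h
    · subst h; simp
    · have hδ : 0 < t - s := by linarith
      rw [hφt]
      nlinarith [mul_le_mul_of_nonneg_left hB_le (le_of_lt hδ)]
  -- monotonicity of H
  have hmono : ∀ s, t₀ ≤ s → ∀ t, s ≤ t → t < T → H t ≤ H s := by
    intro s hs t hst htT
    rcases eq_or_lt_of_le hst with h | h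
    · rw [h]
    · nlinarith [key s hs t hst htT, sq_nonneg (φ t - φ s)]
  constructor
  · -- boundedness
    refine ⟨|φ t₀| + Real.sqrt (2 * (T - t₀) * (H t₀ - m)), ?_⟩
    intro t ht
    have hk := key t₀ le_rfl t ht.1 ht.2
    have hle : (φ t - φ t₀) ^ 2 ≤ 2 * (T - t₀) * (H t₀ - m) := by
      have h1 : m ≤ H t := hm t ht
      have h2 : H t ≤ H t₀ := hmono t₀ le_rfl t ht.1 ht.2
      have h3 : m ≤ H t₀ := le_trans h1 h2
      nlinarith [mul_le_mul (show t - t₀ ≤ T - t₀ by linarith [ht.2])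
        (show H t₀ - H t ≤ H t₀ - m by linarith) (by linarith) (by linarith [ht.1])]
    have habs : |φ t - φ t₀| ≤ Real.sqrt (2 * (T - t₀) * (H t₀ - m)) := by
      rw [← Real.sqrt_sq_eq_abs]
      exact Real.sqrt_le_sqrt hle
    calc |φ t| ≤ |φ t₀| + |φ t - φ t₀| := by
          have := abs_add_le (φ t₀) (φ t - φ t₀); simpa using this
      _ ≤ _ := by linarith
  · -- convergence
    have hne : (H '' Set.Ico t₀ T).Nonempty := ⟨H t₀, ⟨t₀, ⟨le_rfl, ht₀T⟩, rfl⟩⟩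
    have hbdd : BddBelow (H '' Set.Ico t₀ T) := ⟨m, fun x ⟨u, hu, hux⟩ => hux ▸ hm u hu⟩
    set c := sInf (H '' Set.Ico t₀ T) with hc
    have hc_le : ∀ t ∈ Set.Ico t₀ T, c ≤ H t := fun t ht => csInf_le hbdd ⟨t, ht, rfl⟩
    have hcauchy : Cauchy (Filter.map φ (nhdsWithin T (Set.Iio T))) := by
      rw [Metric.cauchy_iff]
      constructor
      · exact Filter.map_neBot
      · intro ε hε
        have hTt0 : 0 < T - t₀ := by linarith
        have hδpos : 0 < ε ^ 2 / (4 * (T - t₀)) := by positivity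
        obtain ⟨x, ⟨s₀, hs₀, rfl⟩, hxlt⟩ := Real.lt_sInf_add_pos hne hδpos
        refine ⟨φ '' Set.Ico s₀ T, ?_, ?_⟩
        · rw [Filter.mem_map]
          exact Filter.mem_of_superset (Ico_mem_nhdsLT_of_mem ⟨hs₀.2, le_rfl⟩)
            (Set.subset_preimage_image φ _)
        · rintro x ⟨a, ha, rfl⟩ z ⟨b, hb, rfl⟩
          have hdist : ∀ a b : ℝ, a ∈ Set.Ico s₀ T → b ∈ Set.Ico s₀ T → a ≤ b →
              dist (φ a) (φ b) < ε := by
            intro a b ha hb hab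
            have haI : a ∈ Set.Ico t₀ T := ⟨le_trans hs₀.1 ha.1, ha.2⟩
            have hbI : b ∈ Set.Ico t₀ T := ⟨le_trans hs₀.1 hb.1, hb.2⟩
            have hk := key a haI.1 b hab hb.2
            have h1 : H a ≤ H s₀ := hmono s₀ hs₀.1 a ha.1 ha.2
            have h2 : c ≤ H b := hc_le b hbI
            have h3 : H a - H b < ε ^ 2 / (4 * (T - t₀)) := by linarith
            have h4 : 0 ≤ H a - H b := by linarith [hmono a haI.1 b hab hb.2]
            have h5 : b - a ≤ T - t₀ := by
              have := haI.1; have := hb.2; linarith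
            have h6 : (φ b - φ a) ^ 2 < ε ^ 2 := by
              have hTt : 0 < T - t₀ := by linarith
              have hA1 : 2 * (b - a) * (H a - H b) ≤ 2 * (T - t₀) * (H a - H b) := by
                nlinarith
              have hA2 : 2 * (T - t₀) * (H a - H b) < 2 * (T - t₀) * (ε ^ 2 / (4 * (T - t₀))) :=
                mul_lt_mul_of_pos_left h3 (by linarith)
              have hA3 : 2 * (T - t₀) * (ε ^ 2 / (4 * (T - t₀))) = ε ^ 2 / 2 := by
                field_simp
                ring
              nlinarith
            rw [Real.dist_eq]
            by_contra hcon
            push_neg at hcon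
            have : ε ^ 2 ≤ |φ a - φ b| ^ 2 := by nlinarith [abs_nonneg (φ a - φ b)]
            rw [sq_abs] at this
            nlinarith
          rcases le_total a b with h | h
          · exact hdist a b ha hb h
          · rw [dist_comm]; exact hdist b a hb ha h
    obtain ⟨L, hL⟩ := CompleteSpace.complete hcauchy
    exact ⟨L, hL⟩
end

section
/- Fix constants γ, α, λ with 0 < γ < 4/3, 0 < α < √(3/2)·(2 − γ), and λ < −α − 3γ(2−γ)/(2α). Consider the planar vector field F(w, z) = ( (w²/2 − 3)(w + λ) + z²((γ/2)w + α + λ), (1/2)z(w² − αw + γ(z² − 3)) ) and the point C = (2α/(2−γ), √(3(2−γ)² − 2α²)/(2−γ)). Then C is a zero of F, and the Jacobian matrix of F at C has negative trace and positive determinant; hence both of its eigenvalues have negative real part and C is a hyperbolic sink of the planar system. -/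
/-!
At `C` one has `(2 - γ) w = 2α` and `(2 - γ)² z² = 3(2 - γ)² - 2α²`, which reduce the Jacobian to
`[[w(w + λ) - (1 - γ/2) z², 2z(w + λ)], [z(2w - α)/2, γ z²]]`, and turn the bound on `λ` into
`α(w + λ) < -γ(2 - γ) z²/2`. This single inequality gives `det J = z² (-α(w + λ) - γ(2 - γ) z²/2) > 0`
and, because `(2 - γ) w(w + λ) = 2α(w + λ)`, also `tr J < -(2 - γ) z²/2 ≤ 0`. A real `2 × 2` matrix
with negative trace and positive determinant has both eigenvalues in the open left half-plane.
-/

lemma Complex.re_neg_of_sq_sub_mul_add_eq_zero {T D : ℝ} (hT : T < 0) (hD : 0 < D) {μ : ℂ}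
    (h : μ ^ 2 - T * μ + D = 0) : μ.re < 0 := by
  have hre : μ.re ^ 2 - μ.im ^ 2 - T * μ.re + D = 0 := by
    simpa [sq] using congrArg Complex.re h
  have him : μ.im * (2 * μ.re - T) = 0 := by
    have := congrArg Complex.im h
    simp only [sq, Complex.sub_im, Complex.add_im, Complex.mul_im, Complex.ofReal_re,
      Complex.ofReal_im, zero_mul, add_zero, Complex.zero_im] at this
    linear_combination this
  rcases mul_eq_zero.mp him with hreal | hre_eq
  · rw [hreal] at hre
    nlinarith
  · linarith

lemma Matrix.re_neg_of_isRoot_charpoly_fin_two {A : Matrix (Fin 2) (Fin 2) ℝ}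
    (htr : A.trace < 0) (hdet : 0 < A.det) {μ : ℂ}
    (hμ : (A.map Complex.ofReal).charpoly.IsRoot μ) : μ.re < 0 := by
  rw [show A.map Complex.ofReal = A.map Complex.ofRealHom from rfl, Matrix.charpoly_map,
    Matrix.charpoly_fin_two] at hμ
  simp only [Polynomial.IsRoot.def, Polynomial.eval_map, Polynomial.eval₂_add,
    Polynomial.eval₂_sub, Polynomial.eval₂_mul, Polynomial.eval₂_X_pow, Polynomial.eval₂_C,
    Polynomial.eval₂_X, Complex.ofRealHom_eq_coe] at hμ
  exact Complex.re_neg_of_sq_sub_mul_add_eq_zero htr hdet hμ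

noncomputable def fieldW (γ α lam w z : ℝ) : ℝ :=
  (w ^ 2 / 2 - 3) * (w + lam) + z ^ 2 * ((γ / 2) * w + α + lam)

noncomputable def fieldZ (γ α w z : ℝ) : ℝ :=
  (1 / 2) * z * (w ^ 2 - α * w + γ * (z ^ 2 - 3))

section Derivatives

variable (γ α lam w z : ℝ)

lemma hasDerivAt_fieldW_fst :
    HasDerivAt (fun w => fieldW γ α lam w z)
      (w * (w + lam) + (w ^ 2 / 2 - 3) + z ^ 2 * (γ / 2)) w := by
  have := (((hasDerivAt_pow 2 w).div_const 2).sub_const 3).mul ((hasDerivAt_id w).add_const lam)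
    |>.add (((((hasDerivAt_id w).const_mul (γ / 2)).add_const α).add_const lam).const_mul (z ^ 2))
  exact this.congr_deriv (by simp)

lemma hasDerivAt_fieldW_snd :
    HasDerivAt (fun z => fieldW γ α lam w z) (2 * z * ((γ / 2) * w + α + lam)) z := by
  have := ((hasDerivAt_pow 2 z).mul_const ((γ / 2) * w + α + lam)).const_add
    ((w ^ 2 / 2 - 3) * (w + lam))
  exact this.congr_deriv (by simp)

lemma hasDerivAt_fieldZ_fst :
    HasDerivAt (fun w => fieldZ γ α w z) ((1 / 2) * z * (2 * w - α)) w := by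
  have := (((hasDerivAt_pow 2 w).sub ((hasDerivAt_id w).const_mul α)).add_const
    (γ * (z ^ 2 - 3))).const_mul ((1 / 2) * z)
  exact this.congr_deriv (by simp)

lemma hasDerivAt_fieldZ_snd :
    HasDerivAt (fun z => fieldZ γ α w z)
      ((1 / 2) * (w ^ 2 - α * w + γ * (z ^ 2 - 3)) + (1 / 2) * z * (γ * (2 * z))) z := by
  have := ((hasDerivAt_id z).const_mul (1 / 2)).mul
    ((((hasDerivAt_pow 2 z).sub_const 3).const_mul γ).const_add (w ^ 2 - α * w))
  exact this.congr_deriv (by simp)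

end Derivatives

section Equilibrium

variable {γ α w z : ℝ}

lemma half_sq_sub_three_eq_neg_sq (hs : 2 - γ ≠ 0) (hw : (2 - γ) * w = 2 * α)
    (hz : (2 - γ) ^ 2 * z ^ 2 = 3 * (2 - γ) ^ 2 - 2 * α ^ 2) : w ^ 2 / 2 - 3 = -z ^ 2 := by
  refine mul_left_cancel₀ (pow_ne_zero 2 hs) ?_
  linear_combination ((2 - γ) * w + 2 * α) / 2 * hw + hz

lemma half_mul_add_eq_self (hs : 2 - γ ≠ 0) (hw : (2 - γ) * w = 2 * α) :
    γ / 2 * w + α = w := by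
  refine mul_left_cancel₀ hs ?_
  linear_combination (γ / 2 - 1) * hw

lemma mul_add_lt_of_lam_lt {lam : ℝ} (hα : 0 < α) (hs : 0 < 2 - γ) (hw : (2 - γ) * w = 2 * α)
    (hz : (2 - γ) ^ 2 * z ^ 2 = 3 * (2 - γ) ^ 2 - 2 * α ^ 2)
    (hlam : lam < -α - 3 * γ * (2 - γ) / (2 * α)) :
    α * (w + lam) < -(γ * (2 - γ) / 2) * z ^ 2 := by
  have hcancel : α * (3 * γ * (2 - γ) / (2 * α)) = 3 * γ * (2 - γ) / 2 := by
    field_simp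
  have hαlam : α * lam < -α ^ 2 - 3 * γ * (2 - γ) / 2 := by
    linear_combination mul_lt_mul_of_pos_left hlam hα - hcancel
  refine lt_of_mul_lt_mul_left ?_ hs.le
  linear_combination mul_lt_mul_of_pos_left hαlam hs + α * hw + γ / 2 * hz

lemma sq_sub_mul_add_mul_eq_zero (hs : 2 - γ ≠ 0) (hw : (2 - γ) * w = 2 * α)
    (hz : (2 - γ) ^ 2 * z ^ 2 = 3 * (2 - γ) ^ 2 - 2 * α ^ 2) :
    w ^ 2 - α * w + γ * (z ^ 2 - 3) = 0 := by
  linear_combination γ * half_sq_sub_three_eq_neg_sq hs hw hz - w * half_mul_add_eq_self hs hw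

lemma fieldW_eq_zero (lam : ℝ) (hs : 2 - γ ≠ 0) (hw : (2 - γ) * w = 2 * α)
    (hz : (2 - γ) ^ 2 * z ^ 2 = 3 * (2 - γ) ^ 2 - 2 * α ^ 2) : fieldW γ α lam w z = 0 := by
  rw [fieldW, half_sq_sub_three_eq_neg_sq hs hw hz, half_mul_add_eq_self hs hw]
  ring

lemma fieldZ_eq_zero (hs : 2 - γ ≠ 0) (hw : (2 - γ) * w = 2 * α)
    (hz : (2 - γ) ^ 2 * z ^ 2 = 3 * (2 - γ) ^ 2 - 2 * α ^ 2) : fieldZ γ α w z = 0 := by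
  rw [fieldZ, sq_sub_mul_add_mul_eq_zero hs hw hz, mul_zero]

lemma jacobian_eq (lam : ℝ) (hs : 2 - γ ≠ 0) (hw : (2 - γ) * w = 2 * α)
    (hz : (2 - γ) ^ 2 * z ^ 2 = 3 * (2 - γ) ^ 2 - 2 * α ^ 2) :
    !![deriv (fun w => fieldW γ α lam w z) w, deriv (fun z => fieldW γ α lam w z) z;
        deriv (fun w => fieldZ γ α w z) w, deriv (fun z => fieldZ γ α w z) z] =
      !![w * (w + lam) - (1 - γ / 2) * z ^ 2, 2 * z * (w + lam);
        1 / 2 * z * (2 * w - α), γ * z ^ 2] := by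
  rw [(hasDerivAt_fieldW_fst ..).deriv, (hasDerivAt_fieldW_snd ..).deriv,
    (hasDerivAt_fieldZ_fst ..).deriv, (hasDerivAt_fieldZ_snd ..).deriv,
    half_sq_sub_three_eq_neg_sq hs hw hz, half_mul_add_eq_self hs hw,
    sq_sub_mul_add_mul_eq_zero hs hw hz]
  ring_nf

end Equilibrium

section Jacobian

variable {γ α lam w z : ℝ}

lemma jacobian_trace_neg (hs : 0 < 2 - γ) (hw : (2 - γ) * w = 2 * α)
    (hkey : α * (w + lam) < -(γ * (2 - γ) / 2) * z ^ 2) :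
    w * (w + lam) - (1 - γ / 2) * z ^ 2 + γ * z ^ 2 < 0 := by
  refine neg_of_mul_neg_right (a := 2 - γ) ?_ hs.le
  have hscaled : (2 - γ) * (w * (w + lam) - (1 - γ / 2) * z ^ 2 + γ * z ^ 2)
      = 2 * (α * (w + lam)) + (2 - γ) * (3 * γ / 2 - 1) * z ^ 2 := by
    linear_combination (w + lam) * hw
  rw [hscaled]
  nlinarith [sq_nonneg ((2 - γ) * z)]

lemma jacobian_det_pos (hz : z ≠ 0) (hw : (2 - γ) * w = 2 * α)
    (hkey : α * (w + lam) < -(γ * (2 - γ) / 2) * z ^ 2) :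
    0 < (w * (w + lam) - (1 - γ / 2) * z ^ 2) * (γ * z ^ 2)
      - 2 * z * (w + lam) * (1 / 2 * z * (2 * w - α)) := by
  have hdet : (w * (w + lam) - (1 - γ / 2) * z ^ 2) * (γ * z ^ 2)
      - 2 * z * (w + lam) * (1 / 2 * z * (2 * w - α))
      = z ^ 2 * (-(γ * (2 - γ) / 2) * z ^ 2 - α * (w + lam)) := by
    linear_combination -z ^ 2 * (w + lam) * hw
  rw [hdet]
  exact mul_pos (sq_pos_of_ne_zero hz) (by linarith)

end Jacobian

theorem normalized_system_C_is_sink_general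
    (γ α lam : ℝ)
    (hγ : γ < 4 / 3)
    (hα0 : 0 < α) (hα : α < Real.sqrt (3 / 2) * (2 - γ))
    (hlam : lam < -α - 3 * γ * (2 - γ) / (2 * α)) :
    let F1 : ℝ → ℝ → ℝ := fun w z =>
      (w ^ 2 / 2 - 3) * (w + lam) + z ^ 2 * ((γ / 2) * w + α + lam)
    let F2 : ℝ → ℝ → ℝ := fun w z =>
      (1 / 2) * z * (w ^ 2 - α * w + γ * (z ^ 2 - 3))
    let wC : ℝ := 2 * α / (2 - γ)
    let zC : ℝ := Real.sqrt (3 * (2 - γ) ^ 2 - 2 * α ^ 2) / (2 - γ)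
    let J : Matrix (Fin 2) (Fin 2) ℝ :=
      !![deriv (fun w => F1 w zC) wC, deriv (fun z => F1 wC z) zC;
         deriv (fun w => F2 w zC) wC, deriv (fun z => F2 wC z) zC]
    F1 wC zC = 0 ∧ F2 wC zC = 0 ∧
    Matrix.trace J < 0 ∧ 0 < J.det ∧
    ∀ μ : ℂ, (Matrix.charpoly (J.map Complex.ofReal)).IsRoot μ → μ.re < 0 := by
  intro F1 F2 wC zC J
  have hs : 0 < 2 - γ := by linarith
  have hα2 : 0 < 3 * (2 - γ) ^ 2 - 2 * α ^ 2 := by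
    have := pow_lt_pow_left₀ hα hα0.le two_ne_zero
    rw [mul_pow, Real.sq_sqrt (by norm_num)] at this
    linarith
  have hw : (2 - γ) * wC = 2 * α := mul_div_cancel₀ _ hs.ne'
  have hz : (2 - γ) ^ 2 * zC ^ 2 = 3 * (2 - γ) ^ 2 - 2 * α ^ 2 := by
    rw [div_pow, Real.sq_sqrt hα2.le, mul_div_cancel₀ _ (pow_ne_zero 2 hs.ne')]
  have hz0 : zC ≠ 0 := (div_pos (Real.sqrt_pos.mpr hα2) hs).ne'
  clear_value wC zC
  have hJ : J = _ := jacobian_eq lam hs.ne' hw hz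
  have hkey := mul_add_lt_of_lam_lt hα0 hs hw hz hlam
  have htr : J.trace < 0 := by
    rw [hJ, Matrix.trace_fin_two_of]
    exact jacobian_trace_neg hs hw hkey
  have hdet : 0 < J.det := by
    rw [hJ, Matrix.det_fin_two_of]
    exact jacobian_det_pos hz0 hw hkey
  exact ⟨fieldW_eq_zero lam hs.ne' hw hz, fieldZ_eq_zero hs.ne' hw hz, htr, hdet,
    fun μ => Matrix.re_neg_of_isRoot_charpoly_fin_two htr hdet⟩

/-- under the condition `0 < γ < 4/3`, `0 < α < √(3/2)(2-γ)`,
`λ < -α - 3γ(2-γ)/(2α)`, the point `C` is an equilibrium of the normalized system whose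
Jacobian matrix has negative trace and positive determinant; hence both eigenvalues
(the complex roots of its characteristic polynomial) have negative real part, so `C`
is a hyperbolic sink. -/
theorem normalized_system_C_is_sink
    (γ α lam : ℝ)
    (hγ0 : 0 < γ) (hγ : γ < 4 / 3)
    (hα0 : 0 < α) (hα : α < Real.sqrt (3 / 2) * (2 - γ))
    (hlam : lam < -α - 3 * γ * (2 - γ) / (2 * α)) :
    let F1 : ℝ → ℝ → ℝ := fun w z =>
      (w ^ 2 / 2 - 3) * (w + lam) + z ^ 2 * ((γ / 2) * w + α + lam)
    let F2 : ℝ → ℝ → ℝ := fun w z =>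
      (1 / 2) * z * (w ^ 2 - α * w + γ * (z ^ 2 - 3))
    let wC : ℝ := 2 * α / (2 - γ)
    let zC : ℝ := Real.sqrt (3 * (2 - γ) ^ 2 - 2 * α ^ 2) / (2 - γ)
    let J : Matrix (Fin 2) (Fin 2) ℝ :=
      !![deriv (fun w => F1 w zC) wC, deriv (fun z => F1 wC z) zC;
         deriv (fun w => F2 w zC) wC, deriv (fun z => F2 wC z) zC]
    F1 wC zC = 0 ∧ F2 wC zC = 0 ∧
    Matrix.trace J < 0 ∧ 0 < J.det ∧
    ∀ μ : ℂ, (Matrix.charpoly (J.map Complex.ofReal)).IsRoot μ → μ.re < 0 :=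
  normalized_system_C_is_sink_general γ α lam hγ hα0 hα hlam
end
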